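/- Proposition 3.1 (projected PCA least squares solution): let Y be an N×T real matrix, Φ an N×K matrix with Φ'Φ invertible, and P = Φ(Φ'Φ)⁻¹Φ'. Consider minimizing ‖Y − ΦBF'‖_F² over K×R matrices B and T×R matrices F subject to F'F/T = I_R. Then an optimal F is given by √T times the matrix of orthonormal eigenvectors corresponding to the R largest eigenvalues of the T×T positive semidefinite matrix Y'PY, and the corresponding optimal loading matrix is G = ΦB = PYF/T. -/

import Mathlib

open Matrix
open scoped BigOperators

set_option maxHeartbeats 1000000

/-- Squared Frobenius norm. -/
noncomputable def frobSq {m n : ℕ} (A : Matrix (Fin m) (Fin n) ℝ) : ℝ :=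
  ∑ i, ∑ j, (A i j) ^ 2

private lemma inner_eq_dot {T : ℕ} (a b : Fin T → ℝ) :
    (inner ℝ ((WithLp.equiv 2 (Fin T → ℝ)).symm a) ((WithLp.equiv 2 (Fin T → ℝ)).symm b) : ℝ)
      = a ⬝ᵥ b := by
  simp [PiLp.inner_apply, RCLike.inner_apply, dotProduct, mul_comm]

private lemma kyFanTrace {T R : ℕ} (hT : 0 < T) (hR : 0 < R)
    (M : Matrix (Fin T) (Fin T) ℝ) (hM : M.IsHermitian)
    (F₀ : Matrix (Fin T) (Fin R) ℝ) (μ : Fin R → ℝ)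
    (hF₀ : F₀.transpose * F₀ = (T : ℝ) • (1 : Matrix (Fin R) (Fin R) ℝ))
    (heig : ∀ k : Fin R, M *ᵥ (fun t => F₀ t k) = μ k • fun t => F₀ t k)
    (htop : ∀ (ν : ℝ) (v : Fin T → ℝ), v ≠ 0 → M *ᵥ v = ν • v →
      (∀ k : Fin R, v ⬝ᵥ (fun t => F₀ t k) = 0) → ∀ k, ν ≤ μ k)
    (F : Matrix (Fin T) (Fin R) ℝ)
    (hF : F.transpose * F = (T : ℝ) • (1 : Matrix (Fin R) (Fin R) ℝ)) :
    Matrix.trace (F.transpose * (M * F)) ≤ (T : ℝ) * ∑ k, μ k := by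
  classical
  have hT0 : (0:ℝ) < (T:ℝ) := by exact_mod_cast hT
  set st : ℝ := Real.sqrt T with hst
  have hst0 : 0 < st := Real.sqrt_pos.mpr hT0
  have hstsq : st * st = (T:ℝ) := Real.mul_self_sqrt hT0.le
  set ι := (WithLp.equiv 2 (Fin T → ℝ)).symm with hιdef
  set A := Matrix.toEuclideanLin M with hAdef
  have hAsymm : A.IsSymmetric := Matrix.isHermitian_iff_isSymmetric.mp hM
  have hApp : ∀ v : Fin T → ℝ, A (ι v) = ι (M *ᵥ v) := by
    intro v
    simp [hAdef, hιdef, Matrix.toEuclideanLin_apply]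
  have hιsmul : ∀ (c : ℝ) (v : Fin T → ℝ), ι (c • v) = c • ι v := by
    intro c v; rfl
  set f : Fin R → EuclideanSpace ℝ (Fin T) := fun k => ι (fun t => F₀ t k) with hfdef
  set g : Fin R → EuclideanSpace ℝ (Fin T) := fun i => ι (fun t => F t i) with hgdef
  have hff : ∀ k l, (inner ℝ (f k) (f l) : ℝ) = if k = l then (T:ℝ) else 0 := by
    intro k l
    have h := congrFun (congrFun hF₀ k) l
    simp [Matrix.mul_apply, Matrix.one_apply, mul_comm] at h
    rw [hfdef]
    rw [inner_eq_dot]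
    simpa [dotProduct, mul_comm] using h
  have hgg : ∀ k l, (inner ℝ (g k) (g l) : ℝ) = if k = l then (T:ℝ) else 0 := by
    intro k l
    have h := congrFun (congrFun hF k) l
    simp [Matrix.mul_apply, Matrix.one_apply, mul_comm] at h
    rw [hgdef]
    rw [inner_eq_dot]
    simpa [dotProduct, mul_comm] using h
  have hAf : ∀ k, A (f k) = μ k • f k := by
    intro k
    show A (ι fun t => F₀ t k) = μ k • ι fun t => F₀ t k
    rw [hApp, heig k, hιsmul]
  -- the span of the eigenvectors and its orthogonal complement
  set S := Submodule.span ℝ (Set.range f) with hSdef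
  have hfS : ∀ k, f k ∈ S := fun k => Submodule.subset_span ⟨k, rfl⟩
  have hKmem : ∀ x : EuclideanSpace ℝ (Fin T), (∀ k, (inner ℝ (f k) x : ℝ) = 0) → x ∈ Sᗮ := by
    intro x hx
    rw [Submodule.mem_orthogonal]
    intro u hu
    induction hu using Submodule.span_induction with
    | mem u hu => obtain ⟨k, rfl⟩ := hu; exact hx k
    | zero => simp
    | add u v _ _ h1 h2 => simp [inner_add_left, h1, h2]
    | smul c u _ h1 => simp [inner_smul_left, h1]
  have hKinv : ∀ x ∈ Sᗮ, A x ∈ Sᗮ := by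
    intro x hx
    apply hKmem
    intro k
    rw [← hAsymm (f k) x, hAf, inner_smul_left]
    have : (inner ℝ (f k) x : ℝ) = 0 := (Submodule.mem_orthogonal S x).mp hx _ (hfS k)
    simp [this]
  set Ares := A.restrict hKinv with hAresdef
  have hAresSymm : Ares.IsSymmetric := hAsymm.restrict_invariant hKinv
  set W := hAresSymm.eigenvectorBasis rfl with hWdef
  set ν := hAresSymm.eigenvalues rfl with hνdef
  have hAW : ∀ j, Ares (W j) = ν j • W j := fun j => hAresSymm.apply_eigenvectorBasis rfl j
  -- m : the minimum of the top eigenvalues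
  have hne : (Finset.univ : Finset (Fin R)).Nonempty := ⟨⟨0, hR⟩, Finset.mem_univ _⟩
  set m := Finset.univ.inf' hne μ with hmdef
  have hmle : ∀ k, m ≤ μ k := fun k => Finset.inf'_le μ (Finset.mem_univ k)
  -- every eigenvalue of the restriction is at most m
  have hνm : ∀ j, ν j ≤ m := by
    intro j
    apply Finset.le_inf'
    intro k _
    set w : EuclideanSpace ℝ (Fin T) := (W j : EuclideanSpace ℝ (Fin T)) with hwdef
    set v : Fin T → ℝ := WithLp.equiv 2 (Fin T → ℝ) w with hvdef
    have hιv : ι v = w := by rw [hvdef, hιdef]; exact (WithLp.equiv 2 (Fin T → ℝ)).symm_apply_apply w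
    have hw0 : w ≠ 0 := by
      simp only [hwdef, ne_eq, ZeroMemClass.coe_eq_zero]
      exact W.toBasis.ne_zero j
    have hv0 : v ≠ 0 := by
      intro h
      apply hw0
      rw [← hιv, h]
      rfl
    have hAw : A w = ν j • w := by
      have : ((Ares (W j) : (Sᗮ : Submodule ℝ (EuclideanSpace ℝ (Fin T)))) : EuclideanSpace ℝ (Fin T)) = A w :=
        LinearMap.restrict_coe_apply _ _ _
      rw [← this, hAW j]
      rfl
    have hMv : M *ᵥ v = ν j • v := by
      have h1 : ι (M *ᵥ v) = ι (ν j • v) := by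
        rw [← hApp, hιv, hιsmul, hιv, hAw]
      exact (WithLp.equiv 2 (Fin T → ℝ)).symm.injective h1
    have horth : ∀ k : Fin R, v ⬝ᵥ (fun t => F₀ t k) = 0 := by
      intro k
      have h1 : (inner ℝ w (f k) : ℝ) = 0 := by
        rw [real_inner_comm]
        exact (Submodule.mem_orthogonal S w).mp (W j).2 _ (hfS k)
      rw [← inner_eq_dot]
      rw [← hιdef, hιv]
      exact h1
    exact htop (ν j) v hv0 hMv horth k
  -- quadratic form bound on the orthogonal complement
  have hKbound : ∀ x : EuclideanSpace ℝ (Fin T), x ∈ Sᗮ →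
      (inner ℝ x (A x) : ℝ) ≤ m * inner ℝ x x := by
    intro x hx
    set x' : (Sᗮ : Submodule ℝ (EuclideanSpace ℝ (Fin T))) := ⟨x, hx⟩ with hx'def
    have h1 : (inner ℝ x (A x) : ℝ) = inner ℝ x' (Ares x') := by
      rw [Submodule.coe_inner, LinearMap.restrict_coe_apply]
    have h2 : (inner ℝ x x : ℝ) = inner ℝ x' x' := by rw [Submodule.coe_inner]
    rw [h1, h2]
    set c : _ → ℝ := fun j => W.repr x' j with hcdef
    have hexp : Ares x' = ∑ j, c j • ν j • W j := by
      conv_lhs => rw [← W.sum_repr x']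
      rw [map_sum]
      congr 1
      ext j
      rw [LinearMap.map_smul, hAW j]
    have hxc : ∀ j, (inner ℝ x' (W j) : ℝ) = c j := by
      intro j
      rw [real_inner_comm]
      exact (W.repr_apply_apply x' j).symm
    have h3 : (inner ℝ x' (Ares x') : ℝ) = ∑ j, ν j * (c j)^2 := by
      rw [hexp, inner_sum]
      congr 1
      ext j
      rw [real_inner_smul_right, real_inner_smul_right, hxc j]
      ring
    have h4 : (inner ℝ x' x' : ℝ) = ∑ j, (c j)^2 := by
      rw [← W.sum_inner_mul_inner x' x']
      congr 1
      ext j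
      rw [hxc j, real_inner_comm, hxc j]
      ring
    rw [h3, h4, Finset.mul_sum]
    apply Finset.sum_le_sum
    intro j _
    have := hνm j
    nlinarith [sq_nonneg (c j)]
  -- normalized vectors
  set e : Fin R → EuclideanSpace ℝ (Fin T) := fun k => st⁻¹ • f k with hedef
  set u : Fin R → EuclideanSpace ℝ (Fin T) := fun i => st⁻¹ • g i with hudef
  have hee : ∀ k l, (inner ℝ (e k) (e l) : ℝ) = if k = l then 1 else 0 := by
    intro k l
    rw [hedef]
    simp only [real_inner_smul_left, real_inner_smul_right, hff]
    rcases eq_or_ne k l with h | h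
    · subst h
      simp only [if_pos rfl]
      field_simp
      simp only [if_true, mul_one]
      nlinarith [hstsq]
    · simp only [if_neg h, mul_zero]
  have huu : ∀ k l, (inner ℝ (u k) (u l) : ℝ) = if k = l then 1 else 0 := by
    intro k l
    rw [hudef]
    simp only [real_inner_smul_left, real_inner_smul_right, hgg]
    rcases eq_or_ne k l with h | h
    · subst h
      simp only [if_pos rfl]
      field_simp
      simp only [if_true, mul_one]
      nlinarith [hstsq]
    · simp only [if_neg h, mul_zero]
  have hu_on : Orthonormal ℝ u := orthonormal_iff_ite.mpr huu
  have heS : ∀ k, e k ∈ S := fun k => Submodule.smul_mem S _ (hfS k)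
  have hAe : ∀ k, A (e k) = μ k • e k := by
    intro k
    show A (st⁻¹ • f k) = μ k • (st⁻¹ • f k)
    rw [LinearMap.map_smul, hAf, smul_comm]
  have hfe : ∀ k, f k = st • e k := by
    intro k
    rw [hedef]
    simp only [smul_smul]
    rw [mul_inv_cancel₀ (ne_of_gt hst0), one_smul]
  -- the per-column inequality
  have key : ∀ i, (inner ℝ (u i) (A (u i)) : ℝ) ≤
      (∑ k, μ k * (inner ℝ (e k) (u i) : ℝ)^2)
        + m * (1 - ∑ k, (inner ℝ (e k) (u i) : ℝ)^2) := by
    intro i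
    set c : Fin R → ℝ := fun k => (inner ℝ (e k) (u i) : ℝ) with hcdef
    set q := ∑ k, c k • e k with hqdef
    set r := u i - q with hrdef
    have hqS : q ∈ S := Submodule.sum_mem S (fun k _ => Submodule.smul_mem S _ (heS k))
    have hfq : ∀ k, (inner ℝ (f k) q : ℝ) = st * c k := by
      intro k
      rw [hqdef, inner_sum]
      have : ∀ l, (inner ℝ (f k) (c l • e l) : ℝ) = if k = l then st * c l else 0 := by
        intro l
        rw [real_inner_smul_right, hfe k, real_inner_smul_left, hee]
        split_ifs with h
        · subst h; ring
        · ring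
      rw [Finset.sum_congr rfl (fun l _ => this l), Finset.sum_ite_eq]
      simp
    have hrK : r ∈ Sᗮ := by
      apply hKmem
      intro k
      rw [hrdef, inner_sub_right, hfq k, hfe k, real_inner_smul_left]
      rw [hcdef]
      ring
    have hqr : (inner ℝ q r : ℝ) = 0 := (Submodule.mem_orthogonal S r).mp hrK q hqS
    have hAq : A q = ∑ k, (c k * μ k) • e k := by
      rw [hqdef, map_sum]
      congr 1
      ext k
      rw [LinearMap.map_smul, hAe k, smul_smul]
    have hAqS : A q ∈ S := by
      rw [hAq]
      exact Submodule.sum_mem S (fun k _ => Submodule.smul_mem S _ (heS k))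
    have hArK : A r ∈ Sᗮ := hKinv r hrK
    have hu_eq : u i = q + r := by rw [hrdef]; abel
    have hqAr : (inner ℝ q (A r) : ℝ) = 0 := (Submodule.mem_orthogonal S (A r)).mp hArK q hqS
    have hrAq : (inner ℝ r (A q) : ℝ) = 0 := by
      rw [real_inner_comm]
      exact (Submodule.mem_orthogonal S r).mp hrK _ hAqS
    have hqAq : (inner ℝ q (A q) : ℝ) = ∑ k, μ k * (c k)^2 := by
      rw [hAq, hqdef, sum_inner]
      refine Finset.sum_congr rfl fun k _ => ?_
      rw [inner_sum]
      have : ∀ l, (inner ℝ (c k • e k) ((c l * μ l) • e l) : ℝ)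
          = if k = l then μ k * (c k)^2 else 0 := by
        intro l
        rw [real_inner_smul_left, real_inner_smul_right, hee]
        split_ifs with h
        · subst h; ring
        · ring
      rw [Finset.sum_congr rfl (fun l _ => this l), Finset.sum_ite_eq]
      simp
    have hqq : (inner ℝ q q : ℝ) = ∑ k, (c k)^2 := by
      rw [hqdef, sum_inner]
      refine Finset.sum_congr rfl fun k _ => ?_
      rw [inner_sum]
      have : ∀ l, (inner ℝ (c k • e k) (c l • e l) : ℝ)
          = if k = l then (c k)^2 else 0 := by
        intro l
        rw [real_inner_smul_left, real_inner_smul_right, hee]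
        split_ifs with h
        · subst h; ring
        · ring
      rw [Finset.sum_congr rfl (fun l _ => this l), Finset.sum_ite_eq]
      simp
    have hrr : (inner ℝ r r : ℝ) = 1 - ∑ k, (c k)^2 := by
      have h1 : (inner ℝ (u i) (u i) : ℝ) = 1 := by rw [huu]; simp
      have h2 : (inner ℝ q (u i) : ℝ) = ∑ k, (c k)^2 := by
        rw [hqdef, sum_inner]
        congr 1
        ext k
        rw [real_inner_smul_left, hcdef]
        ring
      have h3 : (inner ℝ r (u i) : ℝ) = 1 - ∑ k, (c k)^2 := by
        rw [hrdef, inner_sub_left, h1, h2]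
      have h4 : (inner ℝ r q : ℝ) = 0 := by rw [real_inner_comm]; exact hqr
      calc (inner ℝ r r : ℝ) = inner ℝ r (u i) - inner ℝ r q := by
            rw [hrdef]; rw [inner_sub_right]
        _ = 1 - ∑ k, (c k)^2 := by rw [h3, h4]; ring
    have hdecomp : (inner ℝ (u i) (A (u i)) : ℝ)
        = inner ℝ q (A q) + (inner ℝ q (A r) + (inner ℝ r (A q) + inner ℝ r (A r))) := by
      conv_lhs => rw [hu_eq]
      rw [map_add, inner_add_left, inner_add_right, inner_add_right]
      ring
    rw [hdecomp, hqAq, hqAr, hrAq]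
    have hbound := hKbound r hrK
    rw [hrr] at hbound
    linarith
  -- Bessel: column masses at most 1
  set a : Fin R → ℝ := fun k => ∑ i, (inner ℝ (e k) (u i) : ℝ)^2 with hadef
  have ha1 : ∀ k, a k ≤ 1 := by
    intro k
    have hb := hu_on.sum_inner_products_le (e k) (s := Finset.univ)
    have hek : ‖e k‖^2 = 1 := by
      rw [← real_inner_self_eq_norm_sq, hee]
      simp
    rw [hek] at hb
    calc a k = ∑ i, ‖(inner ℝ (u i) (e k) : ℝ)‖^2 := by
          rw [hadef]
          refine Finset.sum_congr rfl fun i _ => ?_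
          rw [Real.norm_eq_abs, sq_abs, real_inner_comm]
      _ ≤ 1 := hb
  have ha0 : ∀ k, 0 ≤ a k := fun k => Finset.sum_nonneg (fun i _ => sq_nonneg _)
  -- assemble
  have htrace : Matrix.trace (F.transpose * (M * F)) = ∑ i, (inner ℝ (g i) (A (g i)) : ℝ) := by
    rw [Matrix.trace]
    refine Finset.sum_congr rfl fun i _ => ?_
    show (F.transpose * (M * F)).diag i = inner ℝ (ι fun t => F t i) (A (ι fun t => F t i))
    rw [hApp, inner_eq_dot]
    simp [Matrix.diag, Matrix.mul_apply, Matrix.mulVec, dotProduct, Finset.mul_sum, Finset.sum_mul]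
  have hgu : ∀ i, (inner ℝ (g i) (A (g i)) : ℝ) = (T:ℝ) * inner ℝ (u i) (A (u i)) := by
    intro i
    have hg_eq : g i = st • u i := by
      rw [hudef]
      simp only [smul_smul]
      rw [mul_inv_cancel₀ (ne_of_gt hst0), one_smul]
    rw [hg_eq, LinearMap.map_smul, real_inner_smul_left, real_inner_smul_right, ← mul_assoc, hstsq]
  rw [htrace]
  rw [Finset.sum_congr rfl (fun i _ => hgu i), ← Finset.mul_sum]
  apply mul_le_mul_of_nonneg_left _ hT0.le
  calc ∑ i, (inner ℝ (u i) (A (u i)) : ℝ)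
      ≤ ∑ i, ((∑ k, μ k * (inner ℝ (e k) (u i) : ℝ)^2)
          + m * (1 - ∑ k, (inner ℝ (e k) (u i) : ℝ)^2)) :=
        Finset.sum_le_sum (fun i _ => key i)
    _ = (∑ k, μ k * a k) + m * ((R:ℝ) - ∑ k, a k) := by
        have hswap1 : ∑ i : Fin R, ∑ k, μ k * (inner ℝ (e k) (u i) : ℝ)^2
            = ∑ k, μ k * a k := by
          rw [Finset.sum_comm]
          refine Finset.sum_congr rfl fun k _ => ?_
          simp only [hadef, Finset.mul_sum]
        have hswap2 : ∑ i : Fin R, m * (1 - ∑ k, (inner ℝ (e k) (u i) : ℝ)^2)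
            = m * ((R:ℝ) - ∑ k, a k) := by
          rw [← Finset.mul_sum]
          congr 1
          rw [Finset.sum_sub_distrib, Finset.sum_comm]
          simp only [hadef, Finset.sum_const, nsmul_eq_mul, Finset.card_univ,
            Fintype.card_fin, mul_one]
        rw [Finset.sum_add_distrib, hswap1, hswap2]
    _ ≤ ∑ k, μ k := by
        have hcard : ((R:ℝ)) = ∑ _k : Fin R, (1:ℝ) := by simp
        rw [hcard, ← Finset.sum_sub_distrib, Finset.mul_sum, ← Finset.sum_add_distrib]
        apply Finset.sum_le_sum
        intro k _
        have h1 : m * (1 - a k) ≤ μ k * (1 - a k) :=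
          mul_le_mul_of_nonneg_right (hmle k) (by linarith [ha1 k])
        nlinarith

private lemma frobSq_eq_trace' {m n : ℕ} (A : Matrix (Fin m) (Fin n) ℝ) :
    (∑ i, ∑ j, (A i j) ^ 2) = Matrix.trace (A.transpose * A) := by
  rw [Finset.sum_comm, Matrix.trace]
  refine Finset.sum_congr rfl fun j _ => ?_
  simp [Matrix.diag, Matrix.mul_apply, sq]

private lemma frobSq_nonneg' {m n : ℕ} (A : Matrix (Fin m) (Fin n) ℝ) :
    0 ≤ ∑ i, ∑ j, (A i j) ^ 2 :=
  Finset.sum_nonneg fun _ _ => Finset.sum_nonneg fun _ _ => sq_nonneg _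

private lemma frob_identity {N T R : ℕ} (hT : (0:ℝ) < (T:ℝ))
    (Y : Matrix (Fin N) (Fin T) ℝ) (P : Matrix (Fin N) (Fin N) ℝ)
    (hPsym : P.transpose = P) (hPP : P * P = P)
    (G : Matrix (Fin N) (Fin R) ℝ) (hGP : P * G = G)
    (F : Matrix (Fin T) (Fin R) ℝ)
    (hF : F.transpose * F = (T : ℝ) • (1 : Matrix (Fin R) (Fin R) ℝ)) :
    (∑ i, ∑ j, ((Y - G * F.transpose) i j) ^ 2) = Matrix.trace (Y.transpose * Y)
      - (T:ℝ)⁻¹ * Matrix.trace (F.transpose * (Y.transpose * P * Y * F))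
      + (T:ℝ) * ∑ i, ∑ j, ((G - (T:ℝ)⁻¹ • (P * Y * F)) i j) ^ 2 := by
  set c : ℝ := (T:ℝ)⁻¹ with hc
  set t1 := Matrix.trace (Y.transpose * Y) with ht1
  set s := Matrix.trace (G.transpose * (Y * F)) with hs
  set p := Matrix.trace (G.transpose * G) with hp
  set q := Matrix.trace (F.transpose * (Y.transpose * P * Y * F)) with hq
  have hGtP : G.transpose * P = G.transpose := by
    have h := congrArg Matrix.transpose hGP
    rwa [Matrix.transpose_mul, hPsym] at h
  have hs1 : Matrix.trace (Y.transpose * (G * F.transpose)) = s := by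
    rw [← Matrix.trace_transpose (Y.transpose * (G * F.transpose))]
    rw [Matrix.transpose_mul, Matrix.transpose_mul, Matrix.transpose_transpose,
      Matrix.transpose_transpose, Matrix.mul_assoc, Matrix.trace_mul_comm, hs,
      Matrix.mul_assoc]
  have hs2 : Matrix.trace (F * G.transpose * Y) = s := by
    rw [Matrix.mul_assoc, Matrix.trace_mul_comm, hs, Matrix.mul_assoc]
  have hp1 : Matrix.trace (F * G.transpose * (G * F.transpose)) = (T:ℝ) * p := by
    rw [Matrix.mul_assoc, Matrix.trace_mul_comm]
    simp only [Matrix.mul_assoc]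
    rw [hF, Matrix.mul_smul, Matrix.mul_one, Matrix.mul_smul, Matrix.trace_smul, hp,
      smul_eq_mul]
  have e1 : (∑ i, ∑ j, ((Y - G * F.transpose) i j) ^ 2) = t1 - 2*s + (T:ℝ)*p := by
    rw [frobSq_eq_trace', Matrix.transpose_sub, Matrix.transpose_mul,
      Matrix.transpose_transpose, Matrix.sub_mul, Matrix.mul_sub, Matrix.mul_sub,
      Matrix.trace_sub, Matrix.trace_sub, Matrix.trace_sub, hs1, hs2, hp1, ht1]
    ring
  have hcross : Matrix.trace (G.transpose * (P * Y * F)) = s := by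
    rw [Matrix.mul_assoc P Y F, ← Matrix.mul_assoc G.transpose P, hGtP, hs]
  have hquad : Matrix.trace ((P * Y * F).transpose * (P * Y * F)) = q := by
    rw [Matrix.transpose_mul, Matrix.transpose_mul, hPsym]
    rw [hq]
    simp only [Matrix.mul_assoc]
    rw [← Matrix.mul_assoc P P, hPP]
  have e2 : (∑ i, ∑ j, ((G - c • (P * Y * F)) i j) ^ 2) = p - 2*c*s + c^2*q := by
    rw [frobSq_eq_trace', Matrix.transpose_sub, Matrix.transpose_smul,
      Matrix.sub_mul, Matrix.mul_sub, Matrix.mul_sub,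
      Matrix.trace_sub, Matrix.trace_sub, Matrix.trace_sub]
    rw [Matrix.mul_smul, Matrix.trace_smul, hcross]
    rw [Matrix.smul_mul, Matrix.trace_smul]
    have h3 : Matrix.trace ((P * Y * F).transpose * G) = s := by
      rw [← Matrix.trace_transpose ((P * Y * F).transpose * G), Matrix.transpose_mul,
        Matrix.transpose_transpose, ← Matrix.trace_transpose (G.transpose * (P*Y*F)), Matrix.transpose_mul,
        Matrix.transpose_transpose] at *
      · exact hcross
    rw [h3]
    rw [Matrix.smul_mul, Matrix.mul_smul, Matrix.trace_smul, Matrix.trace_smul, hquad, hp]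
    simp only [smul_eq_mul]
    ring
  rw [e1, e2]
  have hTne : (T:ℝ) ≠ 0 := ne_of_gt hT
  rw [hc]
  field_simp
  ring

/-- Proposition 3.1 (projected PCA least squares solution): if the columns of
`F₀/√T` are orthonormal eigenvectors of `YᵀPY` corresponding to its `R` largest
eigenvalues (i.e. `F₀ᵀF₀ = T·I`, each column of `F₀` is an eigenvector, and any
eigenvector orthogonal to the columns of `F₀` has eigenvalue no larger), then
`(B₀, F₀)` with `B₀ = (ΦᵀΦ)⁻¹ΦᵀYF₀/T` minimizes `‖Y − ΦBFᵀ‖_F²` subject to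
`FᵀF/T = I`, and the optimal loading matrix is `ΦB₀ = PYF₀/T`. -/
theorem projected_pca_least_squares {N T K R : ℕ} (hT : 0 < T)
    (Y : Matrix (Fin N) (Fin T) ℝ) (Φ : Matrix (Fin N) (Fin K) ℝ)
    (hΦ : IsUnit (Φ.transpose * Φ))
    (P : Matrix (Fin N) (Fin N) ℝ)
    (hP : P = Φ * (Φ.transpose * Φ)⁻¹ * Φ.transpose)
    (F₀ : Matrix (Fin T) (Fin R) ℝ) (μ : Fin R → ℝ)
    (hF₀ : F₀.transpose * F₀ = (T : ℝ) • (1 : Matrix (Fin R) (Fin R) ℝ))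
    (heig : ∀ k : Fin R,
      (Y.transpose * P * Y) *ᵥ (fun t => F₀ t k) = μ k • fun t => F₀ t k)
    (htop : ∀ (ν : ℝ) (v : Fin T → ℝ), v ≠ 0 →
      (Y.transpose * P * Y) *ᵥ v = ν • v →
      (∀ k : Fin R, v ⬝ᵥ (fun t => F₀ t k) = 0) → ∀ k, ν ≤ μ k)
    (B₀ : Matrix (Fin K) (Fin R) ℝ)
    (hB₀ : B₀ = (T : ℝ)⁻¹ • ((Φ.transpose * Φ)⁻¹ * Φ.transpose * Y * F₀)) :
    (∀ (B : Matrix (Fin K) (Fin R) ℝ) (F : Matrix (Fin T) (Fin R) ℝ),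
        F.transpose * F = (T : ℝ) • (1 : Matrix (Fin R) (Fin R) ℝ) →
        frobSq (Y - Φ * B₀ * F₀.transpose) ≤ frobSq (Y - Φ * B * F.transpose)) ∧
      Φ * B₀ = (T : ℝ)⁻¹ • (P * Y * F₀) := by
  have hT0 : (0:ℝ) < (T:ℝ) := by exact_mod_cast hT
  have hdet : IsUnit (Φ.transpose * Φ).det := (Matrix.isUnit_iff_isUnit_det _).mp hΦ
  have hinv : (Φ.transpose * Φ)⁻¹ * (Φ.transpose * Φ) = 1 := Matrix.nonsing_inv_mul _ hdet
  have hPsym : P.transpose = P := by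
    rw [hP]
    simp only [Matrix.transpose_mul, Matrix.transpose_transpose,
      Matrix.transpose_nonsing_inv]
    simp only [Matrix.mul_assoc]
  have hPΦ : P * Φ = Φ := by
    rw [hP, Matrix.mul_assoc, Matrix.mul_assoc, hinv, Matrix.mul_one]
  have hPP : P * P = P := by
    conv_lhs => rw [hP]
    simp only [Matrix.mul_assoc]
    rw [← Matrix.mul_assoc Φ.transpose Φ,
      ← Matrix.mul_assoc (Φ.transpose * Φ)⁻¹ (Φ.transpose * Φ), hinv, Matrix.one_mul,
      hP]
    simp only [Matrix.mul_assoc]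
  have part2 : Φ * B₀ = (T : ℝ)⁻¹ • (P * Y * F₀) := by
    rw [hB₀, Matrix.mul_smul, hP]
    congr 1
    simp only [Matrix.mul_assoc]
  refine ⟨?_, part2⟩
  intro B F hF
  set M := Y.transpose * P * Y with hMdef
  rcases Nat.eq_zero_or_pos R with hR | hR
  · subst hR
    have hz : ∀ (C : Matrix (Fin K) (Fin 0) ℝ) (D : Matrix (Fin T) (Fin 0) ℝ),
        Φ * C * D.transpose = (0 : Matrix (Fin N) (Fin T) ℝ) := by
      intro C D
      ext i j
      simp [Matrix.mul_apply]
    rw [hz B₀ F₀, hz B F]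
  · have hMt : M.transpose = M := by
      rw [hMdef]
      simp only [Matrix.transpose_mul, Matrix.transpose_transpose, hPsym]
      simp only [Matrix.mul_assoc]
    have hM : M.IsHermitian := by
      show M.conjTranspose = M
      ext i j
      simp only [Matrix.conjTranspose_apply, star_trivial]
      exact congrFun (congrFun hMt i) j
    have hky := kyFanTrace hT hR M hM F₀ μ hF₀ heig htop F hF
    have hG1 : P * (Φ * B) = Φ * B := by rw [← Matrix.mul_assoc, hPΦ]
    have hG2 : P * (Φ * B₀) = Φ * B₀ := by rw [← Matrix.mul_assoc, hPΦ]
    have h1 := frob_identity hT0 Y P hPsym hPP (Φ * B) hG1 F hF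
    have h2 := frob_identity hT0 Y P hPsym hPP (Φ * B₀) hG2 F₀ hF₀
    have hzero : Φ * B₀ - (T:ℝ)⁻¹ • (P * Y * F₀) = 0 := by
      rw [part2]; exact sub_self _
    rw [hzero] at h2
    simp only [Matrix.zero_apply, ne_eq, OfNat.ofNat_ne_zero, not_false_eq_true,
      zero_pow, Finset.sum_const_zero, mul_zero, add_zero] at h2
    have htr0 : Matrix.trace (F₀.transpose * (M * F₀)) = (T:ℝ) * ∑ k, μ k := by
      rw [Matrix.trace]
      have hdiag : ∀ k, (F₀.transpose * (M * F₀)).diag k = μ k * (T:ℝ) := by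
        intro k
        have hFd := congrFun (congrFun hF₀ k) k
        simp only [Matrix.mul_apply, Matrix.smul_apply, Matrix.one_apply_eq,
          Matrix.transpose_apply, smul_eq_mul, mul_one] at hFd
        have heigk : ∀ t, (M *ᵥ fun s => F₀ s k) t = μ k * F₀ t k := by
          intro t
          rw [heig k]
          simp
        calc (F₀.transpose * (M * F₀)).diag k
            = ∑ t, F₀ t k * ((M *ᵥ fun s => F₀ s k) t) := by
              simp [Matrix.diag, Matrix.mul_apply, Matrix.mulVec, dotProduct]
          _ = ∑ t, μ k * (F₀ t k * F₀ t k) := by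
              refine Finset.sum_congr rfl fun t _ => ?_
              rw [heigk t]; ring
          _ = μ k * (T:ℝ) := by rw [← Finset.mul_sum, hFd]
      rw [Finset.sum_congr rfl fun k _ => hdiag k]
      rw [← Finset.sum_mul, mul_comm]
    have hq : Matrix.trace (F₀.transpose * (Y.transpose * P * Y * F₀))
        = (T:ℝ) * ∑ k, μ k := htr0
    rw [hq] at h2
    have hrem : 0 ≤ ∑ i, ∑ j,
        ((Φ * B - (T:ℝ)⁻¹ • (P * Y * F)) i j) ^ 2 := frobSq_nonneg' _
    have hkey : Matrix.trace (F.transpose * (Y.transpose * P * Y * F))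
        ≤ (T:ℝ) * ∑ k, μ k := hky
    have hmul := mul_le_mul_of_nonneg_left hkey (inv_nonneg.mpr hT0.le)
    have hTrem : 0 ≤ (T:ℝ) * ∑ i, ∑ j,
        ((Φ * B - (T:ℝ)⁻¹ • (P * Y * F)) i j) ^ 2 := mul_nonneg hT0.le hrem
    show frobSq _ ≤ frobSq _
    unfold frobSq
    rw [h1, h2]
    linarith
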